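/- arXiv:2603.28909 — 2 statements merged into one kernel-verified Lean document; each statement's English description precedes it below -/
import Mathlib

section
/- Commutator estimate: let φ_l be a standard mollifier at scale l ∈ (0,1] on ℝ^d. For all f, g ∈ C^1(ℝ^d, ℝ) with bounded gradients, one has ‖(fg) ∗ φ_l − (f ∗ φ_l)(g ∗ φ_l)‖_∞ ≤ C l² ‖∇f‖_∞ ‖∇g‖_∞, with C depending only on d and φ. -/
open MeasureTheory

/-- Commutator estimate: there is C = C(d,φ) such that for every scale l ∈ (0,1] and all
    C¹ functions f, g with bounded gradients,
    ‖(fg) ∗ φ_l − (f ∗ φ_l)(g ∗ φ_l)‖_∞ ≤ C l² ‖∇f‖_∞ ‖∇g‖_∞. -/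
theorem stmt5 (d : ℕ) (φ : EuclideanSpace ℝ (Fin d) → ℝ)
    (hφsmooth : ContDiff ℝ (⊤ : ℕ∞) φ)
    (hφradial : ∀ x y : EuclideanSpace ℝ (Fin d), ‖x‖ = ‖y‖ → φ x = φ y)
    (hφsupp : Function.support φ ⊆ Metric.ball 0 1)
    (hφnonneg : ∀ x, 0 ≤ φ x)
    (hφint : ∫ x, φ x = 1) :
    ∃ C : ℝ, 0 < C ∧
      ∀ l : ℝ, 0 < l → l ≤ 1 →
      ∀ f g : EuclideanSpace ℝ (Fin d) → ℝ,
        Differentiable ℝ f → Differentiable ℝ g →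
      ∀ F G : ℝ, (∀ x, ‖fderiv ℝ f x‖ ≤ F) → (∀ x, ‖fderiv ℝ g x‖ ≤ G) →
      ∀ x, |(∫ y, (f (x - y) * g (x - y)) * ((1 / l ^ d) * φ (l⁻¹ • y)))
              - (∫ y, f (x - y) * ((1 / l ^ d) * φ (l⁻¹ • y)))
                * (∫ y, g (x - y) * ((1 / l ^ d) * φ (l⁻¹ • y)))|
            ≤ C * l ^ 2 * F * G := by
  refine ⟨2, two_pos, ?_⟩
  intro l hl hl1 f g hf hg F G hF hG x
  have hF0 : 0 ≤ F := le_trans (norm_nonneg _) (hF x)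
  have hG0 : 0 ≤ G := le_trans (norm_nonneg _) (hG x)
  have hφc : Continuous φ := hφsmooth.continuous
  set μ : EuclideanSpace ℝ (Fin d) → ℝ := fun y => (1 / l ^ d) * φ (l⁻¹ • y) with hμdef
  have hμc : Continuous μ := continuous_const.mul (hφc.comp (continuous_const_smul _))
  have hμ0 : ∀ y, 0 ≤ μ y := fun y => mul_nonneg (by positivity) (hφnonneg _)
  have hμsupp : ∀ y, μ y ≠ 0 → ‖y‖ < l := by
    intro y hy
    have hφy : φ (l⁻¹ • y) ≠ 0 := by
      intro h0; exact hy (by simp [hμdef, h0])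
    have h2 := hφsupp hφy
    rw [Metric.mem_ball, dist_zero_right] at h2
    have h1 : ‖l⁻¹ • y‖ = l⁻¹ * ‖y‖ := by
      rw [norm_smul, Real.norm_eq_abs, abs_of_pos (inv_pos.2 hl)]
    rw [h1] at h2
    have := (inv_mul_lt_iff₀ hl).1 h2
    simpa using this
  have hμcs : HasCompactSupport μ := by
    apply HasCompactSupport.intro (isCompact_closedBall (0 : EuclideanSpace ℝ (Fin d)) l)
    intro y hy
    by_contra h
    exact hy (Metric.mem_closedBall.2 (by simpa [dist_zero_right] using (hμsupp y h).le))
  have hint : ∀ h : EuclideanSpace ℝ (Fin d) → ℝ, Continuous h →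
      Integrable (fun y => h y * μ y) := fun h hc =>
    (hc.mul hμc).integrable_of_hasCompactSupport hμcs.mul_left
  have hμint : Integrable μ := by
    have := hint (fun _ => 1) continuous_const
    simpa using this
  have hμtot : ∫ y, μ y = 1 := by
    have h1 : ∫ y, φ (l⁻¹ • y) = l ^ d := by
      rw [Measure.integral_comp_inv_smul_of_nonneg volume φ hl.le, hφint]
      simp [finrank_euclideanSpace_fin]
    calc ∫ y, μ y = (1 / l ^ d) * ∫ y, φ (l⁻¹ • y) := by
          rw [← integral_const_mul]
      _ = 1 := by rw [h1]; field_simp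
  set u : EuclideanSpace ℝ (Fin d) → ℝ := fun y => f (x - y) with hudef
  set v : EuclideanSpace ℝ (Fin d) → ℝ := fun y => g (x - y) with hvdef
  have huc : Continuous u := hf.continuous.comp (continuous_const.sub continuous_id)
  have hvc : Continuous v := hg.continuous.comp (continuous_const.sub continuous_id)
  have lip : ∀ (h : EuclideanSpace ℝ (Fin d) → ℝ) (H : ℝ), Differentiable ℝ h →
      (∀ z, ‖fderiv ℝ h z‖ ≤ H) → ∀ a b, |h a - h b| ≤ H * ‖a - b‖ := by
    intro h H hh hH a b
    have := convex_univ.norm_image_sub_le_of_norm_fderiv_le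
      (f := h) (C := H) (fun z _ => hh z)
      (fun z _ => hH z) (Set.mem_univ b) (Set.mem_univ a)
    simpa [Real.norm_eq_abs] using this
  have hud : ∀ a b, ‖a‖ < l → ‖b‖ < l → |u a - u b| ≤ F * (2 * l) := by
    intro a b ha hb
    refine le_trans (lip f F hf hF (x - a) (x - b)) (mul_le_mul_of_nonneg_left ?_ hF0)
    have h0 : (x - a) - (x - b) = b - a := by abel
    rw [h0]
    calc ‖b - a‖ ≤ ‖b‖ + ‖a‖ := norm_sub_le _ _
      _ ≤ 2 * l := by linarith
  have hvd : ∀ a b, ‖a‖ < l → ‖b‖ < l → |v a - v b| ≤ G * (2 * l) := by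
    intro a b ha hb
    refine le_trans (lip g G hg hG (x - a) (x - b)) (mul_le_mul_of_nonneg_left ?_ hG0)
    have h0 : (x - a) - (x - b) = b - a := by abel
    rw [h0]
    calc ‖b - a‖ ≤ ‖b‖ + ‖a‖ := norm_sub_le _ _
      _ ≤ 2 * l := by linarith
  have habs : ∀ h : EuclideanSpace ℝ (Fin d) → ℝ, |∫ y, h y| ≤ ∫ y, |h y| := by
    intro h
    simpa [Real.norm_eq_abs] using norm_integral_le_integral_norm (μ := volume) h
  set I1 : ℝ := ∫ y, (u y * v y) * μ y with hI1
  set I2 : ℝ := ∫ y, u y * μ y with hI2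
  set I3 : ℝ := ∫ y, v y * μ y with hI3
  have Iuv : Integrable (fun y => (u y * v y) * μ y) := hint _ (huc.mul hvc)
  have Iu : Integrable (fun y => u y * μ y) := hint _ huc
  have Iv : Integrable (fun y => v y * μ y) := hint _ hvc
  have inner_eq : ∀ y, (∫ z, (u y - u z) * (v y - v z) * μ z)
      = u y * v y - u y * I3 - v y * I2 + I1 := by
    intro y
    have heq : (fun z => (u y - u z) * (v y - v z) * μ z)
        = fun z => (((u y * v y) * μ z - u y * (v z * μ z)) - v y * (u z * μ z))
            + (u z * v z) * μ z := by
      funext z; ring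
    have iA : Integrable (fun z => u y * v y * μ z) := hμint.const_mul _
    have iB : Integrable (fun z => u y * (v z * μ z)) := Iv.const_mul _
    have iC : Integrable (fun z => v y * (u z * μ z)) := Iu.const_mul _
    have iAB : Integrable (fun z => u y * v y * μ z - u y * (v z * μ z)) := by
      exact iA.sub iB
    have iABC : Integrable
        (fun z => u y * v y * μ z - u y * (v z * μ z) - v y * (u z * μ z)) := by
      exact iAB.sub iC
    rw [heq, integral_add iABC Iuv, integral_sub iAB iC, integral_sub iA iB,
      integral_const_mul (u y * v y) μ, integral_const_mul (u y) (fun z => v z * μ z),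
      integral_const_mul (v y) (fun z => u z * μ z), hμtot]
    ring
  set J : ℝ := ∫ y, (∫ z, (u y - u z) * (v y - v z) * μ z) * μ y with hJ
  have heqo : (fun y => (∫ z, (u y - u z) * (v y - v z) * μ z) * μ y)
      = fun y => (u y * v y - u y * I3 - v y * I2 + I1) * μ y := by
    funext y; rw [inner_eq y]
  have houter : J = 2 * (I1 - I2 * I3) := by
    have h1 : J = ∫ y, (u y * v y - u y * I3 - v y * I2 + I1) * μ y := by
      rw [hJ, heqo]
    rw [h1]
    have heq : (fun y => (u y * v y - u y * I3 - v y * I2 + I1) * μ y)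
        = fun y => (((u y * v y) * μ y - I3 * (u y * μ y)) - I2 * (v y * μ y))
            + I1 * μ y := by
      funext y; ring
    have iA : Integrable (fun y => I3 * (u y * μ y)) := Iu.const_mul _
    have iB : Integrable (fun y => I2 * (v y * μ y)) := Iv.const_mul _
    have iC : Integrable (fun y => I1 * μ y) := hμint.const_mul _
    have iAB : Integrable (fun y => u y * v y * μ y - I3 * (u y * μ y)) := by
      exact Iuv.sub iA
    have iABC : Integrable
        (fun y => u y * v y * μ y - I3 * (u y * μ y) - I2 * (v y * μ y)) := by
      exact iAB.sub iB
    rw [heq, integral_add iABC iC, integral_sub iAB iB, integral_sub Iuv iA,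
      integral_const_mul I3 (fun y => u y * μ y), integral_const_mul I2 (fun y => v y * μ y),
      integral_const_mul I1 μ, hμtot]
    ring
  have hbound : ∀ y, |(∫ z, (u y - u z) * (v y - v z) * μ z) * μ y|
      ≤ (F * (2 * l) * (G * (2 * l))) * μ y := by
    intro y
    by_cases hy : μ y = 0
    · simp [hy]
    · have hyl : ‖y‖ < l := hμsupp y hy
      have hin : |∫ z, (u y - u z) * (v y - v z) * μ z|
          ≤ F * (2 * l) * (G * (2 * l)) := by
        have hcz : Continuous (fun z => (u y - u z) * (v y - v z)) :=
          (continuous_const.sub huc).mul (continuous_const.sub hvc)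
        have hIz : Integrable (fun z => (u y - u z) * (v y - v z) * μ z) := hint _ hcz
        have hptw : ∀ z, |(u y - u z) * (v y - v z) * μ z|
            ≤ (F * (2 * l) * (G * (2 * l))) * μ z := by
          intro z
          by_cases hz : μ z = 0
          · simp [hz]
          · have hzl : ‖z‖ < l := hμsupp z hz
            rw [abs_mul, abs_mul, abs_of_nonneg (hμ0 z)]
            have h3 := mul_le_mul (hud y z hyl hzl) (hvd y z hyl hzl)
              (abs_nonneg _) (by positivity)
            exact mul_le_mul_of_nonneg_right h3 (hμ0 z)
        calc |∫ z, (u y - u z) * (v y - v z) * μ z|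
            ≤ ∫ z, |(u y - u z) * (v y - v z) * μ z| := habs _
          _ ≤ ∫ z, (F * (2 * l) * (G * (2 * l))) * μ z :=
              integral_mono hIz.abs (hμint.const_mul _) hptw
          _ = F * (2 * l) * (G * (2 * l)) := by
              rw [integral_const_mul (F * (2 * l) * (G * (2 * l))) μ, hμtot, mul_one]
      rw [abs_mul, abs_of_nonneg (hμ0 y)]
      exact mul_le_mul_of_nonneg_right hin (hμ0 y)
  have hcont_inner : Continuous fun y => u y * v y - u y * I3 - v y * I2 + I1 :=
    (((huc.mul hvc).sub (huc.mul continuous_const)).sub (hvc.mul continuous_const)).add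
      continuous_const
  have Iouter : Integrable (fun y => (∫ z, (u y - u z) * (v y - v z) * μ z) * μ y) := by
    rw [heqo]
    exact hint _ hcont_inner
  have hJle : |J| ≤ F * (2 * l) * (G * (2 * l)) := by
    calc |J| ≤ ∫ y, |(∫ z, (u y - u z) * (v y - v z) * μ z) * μ y| := habs _
      _ ≤ ∫ y, (F * (2 * l) * (G * (2 * l))) * μ y :=
          integral_mono Iouter.abs (hμint.const_mul _) hbound
      _ = F * (2 * l) * (G * (2 * l)) := by
          rw [integral_const_mul (F * (2 * l) * (G * (2 * l))) μ, hμtot, mul_one]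
  have hfinal : |I1 - I2 * I3| ≤ 2 * l ^ 2 * F * G := by
    have h2 : I1 - I2 * I3 = J / 2 := by rw [houter]; ring
    rw [h2, abs_div, abs_two]
    rw [div_le_iff₀ (by norm_num : (0:ℝ) < 2)]
    nlinarith [hJle]
  exact hfinal
end

section
/- Step identity (Kuiper corrugation for the Von Kármán system): Let v ∈ C²(ℝ^d, ℝ^k), w ∈ C²(ℝ^d, ℝ^d), a ∈ C²(ℝ^d, ℝ), λ > 0, η ∈ ℝ^d a unit vector, and n ∈ {1,…,k}. Write t_η = ⟨x, η⟩ and define ṽ = v + (Γ(λt_η)/λ) a e_n and w̃ = w − (Γ(λt_η)/λ) a ∇v^n + (Γ̄(λt_η)/λ) a² η + (Γ̿(λt_η)/λ²) a ∇a, where Γ(t) = 2 sin t, Γ̄(t) = −(1/2) sin 2t, Γ̿(t) = (1/2) cos 2t, Γ̃(t) = 1 − (1/2) cos 2t. Then the following identity holds on ℝ^d: ((1/2)(∇ṽ)ᵀ∇ṽ + sym∇w̃) − ((1/2)(∇v)ᵀ∇v + sym∇w) − a² η⊗η = −(Γ(λt_η)/λ) a ∇²v^n + (Γ̿(λt_η)/λ²)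 a ∇²a + (Γ̃(λt_η)/λ²) ∇a⊗∇a. -/
/-!
Write φ = (Γ(λt_η)/λ) a. Since ∇ṽ differs from ∇v only in row n, where it gains ∇φ, the
quadratic term changes by sym(∇v^n ⊗ ∇φ) + (1/2) ∇φ ⊗ ∇φ, and the mixed part cancels against
sym∇(−φ ∇v^n) = −sym(∇φ ⊗ ∇v^n) − φ ∇²v^n. Because ∇t_η = η, the remaining first-order terms are
a² η ⊗ η, (a/λ) sym(η ⊗ ∇a) and λ⁻² ∇a ⊗ ∇a with coefficients (1/2)(Γ')² + Γ̄' − 1,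
Γ'Γ + 2Γ̄ + Γ̿' and (1/2)Γ² + Γ̿ − Γ̃, which vanish by the three profile identities.
-/

/-- Partial derivative ∂_i f(x) (for scalar functions on ℝ^d). -/
noncomputable def pd {d : ℕ} (f : (Fin d → ℝ) → ℝ) (x : Fin d → ℝ) (i : Fin d) : ℝ :=
  fderiv ℝ f x (Pi.single i 1)

/-- Second partial derivative ∂_i ∂_j f(x). -/
noncomputable def pd2 {d : ℕ} (f : (Fin d → ℝ) → ℝ) (x : Fin d → ℝ) (i j : Fin d) : ℝ :=
  fderiv ℝ (fun y => fderiv ℝ f y (Pi.single j 1)) x (Pi.single i 1)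

noncomputable def Γ : ℝ → ℝ := fun t => 2 * Real.sin t
noncomputable def Γbar : ℝ → ℝ := fun t => -(1/2) * Real.sin (2*t)
noncomputable def Γdbar : ℝ → ℝ := fun t => (1/2) * Real.cos (2*t)
noncomputable def Γtbar : ℝ → ℝ := fun t => 1 - (1/2) * Real.cos (2*t)

section PartialDerivative

variable {d : ℕ} {f g : (Fin d → ℝ) → ℝ} {x : Fin d → ℝ}

lemma HasFDerivAt.pd_eq {f' : (Fin d → ℝ) →L[ℝ] ℝ} (h : HasFDerivAt f f' x) (i : Fin d) :
    pd f x i = f' (Pi.single i 1) := by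
  rw [pd, h.fderiv]

lemma pd_add (hf : DifferentiableAt ℝ f x) (hg : DifferentiableAt ℝ g x) (i : Fin d) :
    pd (fun y => f y + g y) x i = pd f x i + pd g x i :=
  (hf.hasFDerivAt.add hg.hasFDerivAt).pd_eq i

lemma pd_sub (hf : DifferentiableAt ℝ f x) (hg : DifferentiableAt ℝ g x) (i : Fin d) :
    pd (fun y => f y - g y) x i = pd f x i - pd g x i :=
  (hf.hasFDerivAt.sub hg.hasFDerivAt).pd_eq i

lemma pd_mul (hf : DifferentiableAt ℝ f x) (hg : DifferentiableAt ℝ g x) (i : Fin d) :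
    pd (fun y => f y * g y) x i = pd f x i * g x + f x * pd g x i := by
  rw [show (fun y => f y * g y) = f * g from rfl, (hf.hasFDerivAt.mul hg.hasFDerivAt).pd_eq]
  simp only [add_apply, smul_apply, smul_eq_mul, pd]
  ring

lemma pd_mul_const (hf : DifferentiableAt ℝ f x) (c : ℝ) (i : Fin d) :
    pd (fun y => f y * c) x i = pd f x i * c := by
  rw [pd_mul hf (differentiableAt_const c)]
  simp [pd]

lemma pd_const_mul (hf : DifferentiableAt ℝ f x) (c : ℝ) (i : Fin d) :
    pd (fun y => c * f y) x i = c * pd f x i := by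
  rw [pd_mul (differentiableAt_const c) hf]
  simp [pd]

lemma pd_div_const (hf : DifferentiableAt ℝ f x) (c : ℝ) (i : Fin d) :
    pd (fun y => f y / c) x i = pd f x i / c := by
  simpa only [div_eq_mul_inv] using pd_mul_const hf c⁻¹ i

lemma pd_sq (hf : DifferentiableAt ℝ f x) (i : Fin d) :
    pd (fun y => f y ^ 2) x i = 2 * f x * pd f x i := by
  simp only [sq]
  rw [pd_mul hf hf]
  ring

lemma pd_comp {G : ℝ → ℝ} (hG : DifferentiableAt ℝ G (f x)) (hf : DifferentiableAt ℝ f x)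
    (i : Fin d) : pd (fun y => G (f y)) x i = deriv G (f x) * pd f x i :=
  (hG.hasDerivAt.comp_hasFDerivAt x hf.hasFDerivAt).pd_eq i

lemma pd_sum_mul (η : Fin d → ℝ) (i : Fin d) : pd (fun y => ∑ j, y j * η j) x i = η i := by
  have hlin : (fun y : Fin d → ℝ => ∑ j, y j * η j)
      = ∑ j, η j • ContinuousLinearMap.proj (R := ℝ) (φ := fun _ : Fin d => ℝ) j := by
    ext y
    simp [mul_comm]
  simp [pd, hlin, Pi.single_apply]

lemma differentiable_pd (hf : ContDiff ℝ 2 f) (i : Fin d) :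
    Differentiable ℝ (fun y => pd f y i) := fun y =>
  (((hf.fderiv_right (m := 1) (by norm_num)).differentiable one_ne_zero) y).clm_apply
    (differentiableAt_const _)

lemma pd_pd (i j : Fin d) : pd (fun y => pd f y j) x i = pd2 f x i j := rfl

lemma pd2_eq_fderiv_fderiv (hf : ContDiff ℝ 2 f) (i j : Fin d) :
    pd2 f x i j = fderiv ℝ (fderiv ℝ f) x (Pi.single i 1) (Pi.single j 1) := by
  have hf' := (hf.fderiv_right (m := 1) (by norm_num)).differentiable one_ne_zero
  simp [pd2, fderiv_clm_apply (hf' x) (differentiableAt_const _)]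

lemma pd2_comm (hf : ContDiff ℝ 2 f) (i j : Fin d) : pd2 f x i j = pd2 f x j i := by
  rw [pd2_eq_fderiv_fderiv hf, pd2_eq_fderiv_fderiv hf]
  exact hf.contDiffAt.isSymmSndFDerivAt (by simp) _ _

end PartialDerivative

section Corrugation

variable {d : ℕ} {f g h a θ : (Fin d → ℝ) → ℝ} {x : Fin d → ℝ} {G Gb Gdb Gt : ℝ → ℝ}

lemma pd_profile_mul (hG : Differentiable ℝ G) (hθ : DifferentiableAt ℝ θ x)
    (hf : DifferentiableAt ℝ f x) (lam c : ℝ) (i : Fin d) :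
    pd (fun y => G (lam * θ y) / c * f y) x i
      = lam * deriv G (lam * θ x) * pd θ x i / c * f x + G (lam * θ x) / c * pd f x i := by
  rw [pd_mul (by fun_prop) hf, pd_div_const (by fun_prop), pd_comp (hG _) (by fun_prop),
    pd_const_mul hθ]
  ring

lemma pd_corrugated_v {ι : Type*} [DecidableEq ι] (hG : Differentiable ℝ G)
    (hθ : DifferentiableAt ℝ θ x) (hf : DifferentiableAt ℝ f x) (ha : DifferentiableAt ℝ a x)
    {lam : ℝ} (hlam : lam ≠ 0) (m n : ι) (r : Fin d) :
    pd (fun y => f y + (G (lam * θ y) / lam) * a y * (if m = n then 1 else 0)) x r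
      = pd f x r + (if m = n then 1 else 0)
          * (deriv G (lam * θ x) * pd θ x r * a x + G (lam * θ x) / lam * pd a x r) := by
  rw [pd_add hf (by fun_prop), pd_mul_const (by fun_prop), pd_profile_mul hG hθ ha]
  field_simp

lemma pd_corrugated_w (hG : Differentiable ℝ G) (hGb : Differentiable ℝ Gb)
    (hGdb : Differentiable ℝ Gdb) (hθ : DifferentiableAt ℝ θ x) (hf : DifferentiableAt ℝ f x)
    (hg : DifferentiableAt ℝ g x) (hh : DifferentiableAt ℝ h x) (ha : DifferentiableAt ℝ a x)
    {lam : ℝ} (hlam : lam ≠ 0) (c : ℝ) (r : Fin d) :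
    pd (fun y => f y - (G (lam * θ y) / lam) * a y * g y
        + (Gb (lam * θ y) / lam) * (a y)^2 * c + (Gdb (lam * θ y) / lam^2) * a y * h y) x r
      = pd f x r
        - ((deriv G (lam * θ x) * pd θ x r * a x + G (lam * θ x) / lam * pd a x r) * g x
          + G (lam * θ x) / lam * a x * pd g x r)
        + (deriv Gb (lam * θ x) * pd θ x r * a x ^ 2
            + Gb (lam * θ x) / lam * (2 * a x * pd a x r)) * c
        + (deriv Gdb (lam * θ x) / lam * pd θ x r * a x + Gdb (lam * θ x) / lam ^ 2 * pd a x r)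
            * h x
        + Gdb (lam * θ x) / lam ^ 2 * a x * pd h x r := by
  rw [pd_add (by fun_prop) (by fun_prop), pd_add (by fun_prop) (by fun_prop),
    pd_sub hf (by fun_prop), pd_mul (by fun_prop) hg, pd_profile_mul hG hθ ha,
    pd_mul_const (by fun_prop), pd_profile_mul hGb hθ (by fun_prop), pd_sq ha,
    pd_mul (by fun_prop) hh, pd_profile_mul hGdb hθ ha]
  field_simp
  ring

lemma sum_add_ite_mul_add_ite {ι : Type*} [Fintype ι] [DecidableEq ι] (p q : ι → ℝ) (n : ι)
    (b c : ℝ) :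
    ∑ m, (p m + (if m = n then 1 else 0) * b) * (q m + (if m = n then 1 else 0) * c)
      = ∑ m, p m * q m + (p n * c + b * q n + b * c) := by
  have hexpand : ∀ m, (p m + (if m = n then 1 else 0) * b) * (q m + (if m = n then 1 else 0) * c)
      = p m * q m + if m = n then p n * c + b * q n + b * c else 0 := by
    intro m
    split_ifs with hm
    · subst hm; ring
    · ring
  simp only [hexpand, Finset.sum_add_distrib, Finset.sum_ite_eq', Finset.mem_univ, if_true]

theorem corrugation_step (hG : Differentiable ℝ G)
    (hGb : Differentiable ℝ Gb) (hGdb : Differentiable ℝ Gdb)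
    (h₁ : ∀ τ, (1/2) * deriv G τ ^ 2 + deriv Gb τ = 1)
    (h₂ : ∀ τ, deriv G τ * G τ + 2 * Gb τ + deriv Gdb τ = 0)
    (h₃ : ∀ τ, (1/2) * G τ ^ 2 + Gdb τ = Gt τ) {k : ℕ}
    {v : (Fin d → ℝ) → Fin k → ℝ} {w : (Fin d → ℝ) → Fin d → ℝ}
    (hv : ContDiff ℝ 2 v) (hw : Differentiable ℝ w) (ha : ContDiff ℝ 2 a)
    {lam : ℝ} (hlam : lam ≠ 0) (η : Fin d → ℝ) (n : Fin k)
    (teta : (Fin d → ℝ) → ℝ) (hteta : teta = fun x => ∑ i, x i * η i)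
    (vt : (Fin d → ℝ) → Fin k → ℝ)
    (hvt : vt = fun x m =>
      v x m + (G (lam * teta x) / lam) * a x * (if m = n then 1 else 0))
    (wt : (Fin d → ℝ) → Fin d → ℝ)
    (hwt : wt = fun x i =>
      w x i - (G (lam * teta x) / lam) * a x * pd (fun y => v y n) x i
        + (Gb (lam * teta x) / lam) * (a x)^2 * η i
        + (Gdb (lam * teta x) / lam^2) * a x * pd a x i) :
    ∀ x : Fin d → ℝ, ∀ s t : Fin d,
      (((1/2) * ∑ m, pd (fun y => vt y m) x s * pd (fun y => vt y m) x t
          + (pd (fun y => wt y s) x t + pd (fun y => wt y t) x s) / 2)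
        - ((1/2) * ∑ m, pd (fun y => v y m) x s * pd (fun y => v y m) x t
          + (pd (fun y => w y s) x t + pd (fun y => w y t) x s) / 2)
        - (a x)^2 * η s * η t)
      = -(G (lam * teta x) / lam) * a x * pd2 (fun y => v y n) x s t
        + (Gdb (lam * teta x) / lam^2) * a x * pd2 a x s t
        + (Gt (lam * teta x) / lam^2) * pd a x s * pd a x t := by
  subst hvt hwt
  intro x s t
  have hθ : DifferentiableAt ℝ teta x := by rw [hteta]; fun_prop
  have hθη : ∀ i, pd teta x i = η i := by rw [hteta]; exact pd_sum_mul η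
  have hvn : ContDiff ℝ 2 (fun y => v y n) := contDiff_pi.mp hv n
  have hv₁ : ∀ m, DifferentiableAt ℝ (fun y => v y m) x := fun m =>
    ((contDiff_pi.mp hv m).differentiable (by norm_num)) x
  have hw₁ : ∀ i, DifferentiableAt ℝ (fun y => w y i) x := fun i =>
    differentiable_pi.mp hw i x
  have ha₁ : DifferentiableAt ℝ a x := ha.differentiable (by norm_num) x
  simp only [pd_corrugated_v hG hθ (hv₁ _) ha₁ hlam,
    pd_corrugated_w hG hGb hGdb hθ (hw₁ _) (differentiable_pd hvn _ x)
      (differentiable_pd ha _ x) ha₁ hlam, sum_add_ite_mul_add_ite, pd_pd, hθη]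
  rw [pd2_comm hvn t s, pd2_comm ha t s]
  linear_combination (a x ^ 2 * η s * η t) * h₁ (lam * teta x)
    + (a x * (η s * pd a x t + η t * pd a x s) / (2 * lam)) * h₂ (lam * teta x)
    + (pd a x s * pd a x t / lam ^ 2) * h₃ (lam * teta x)

end Corrugation

section Profiles

open Real

lemma hasDerivAt_Γ (τ : ℝ) : HasDerivAt Γ (2 * cos τ) τ :=
  (hasDerivAt_sin τ).const_mul 2

lemma hasDerivAt_Γbar (τ : ℝ) : HasDerivAt Γbar (-cos (2 * τ)) τ :=
  (((hasDerivAt_id' τ).const_mul 2).sin.const_mul (-(1/2))).congr_deriv (by ring)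

lemma hasDerivAt_Γdbar (τ : ℝ) : HasDerivAt Γdbar (-sin (2 * τ)) τ :=
  (((hasDerivAt_id' τ).const_mul 2).cos.const_mul (1/2)).congr_deriv (by ring)

lemma half_deriv_Γ_sq_add_deriv_Γbar (τ : ℝ) : (1/2) * deriv Γ τ ^ 2 + deriv Γbar τ = 1 := by
  rw [(hasDerivAt_Γ τ).deriv, (hasDerivAt_Γbar τ).deriv, cos_two_mul]
  ring

lemma deriv_Γ_mul_Γ_add_two_Γbar_add_deriv_Γdbar (τ : ℝ) :
    deriv Γ τ * Γ τ + 2 * Γbar τ + deriv Γdbar τ = 0 := by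
  rw [(hasDerivAt_Γ τ).deriv, (hasDerivAt_Γdbar τ).deriv, Γ, Γbar, sin_two_mul]
  ring

lemma half_Γ_sq_add_Γdbar (τ : ℝ) : (1/2) * Γ τ ^ 2 + Γdbar τ = Γtbar τ := by
  rw [Γ, Γdbar, Γtbar, cos_two_mul]
  linear_combination 2 * sin_sq_add_cos_sq τ

end Profiles

theorem stmt6_general (d k : ℕ)
    (v : (Fin d → ℝ) → Fin k → ℝ) (w : (Fin d → ℝ) → Fin d → ℝ)
    (a : (Fin d → ℝ) → ℝ)
    (hv : ContDiff ℝ 2 v) (hw : ContDiff ℝ 2 w) (ha : ContDiff ℝ 2 a)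
    (lam : ℝ) (hlam : 0 < lam)
    (η : Fin d → ℝ) (n : Fin k)
    (teta : (Fin d → ℝ) → ℝ) (hteta : teta = fun x => ∑ i, x i * η i)
    (vt : (Fin d → ℝ) → Fin k → ℝ)
    (hvt : vt = fun x m =>
      v x m + (Γ (lam * teta x) / lam) * a x * (if m = n then 1 else 0))
    (wt : (Fin d → ℝ) → Fin d → ℝ)
    (hwt : wt = fun x i =>
      w x i - (Γ (lam * teta x) / lam) * a x * pd (fun y => v y n) x i
        + (Γbar (lam * teta x) / lam) * (a x)^2 * η i
        + (Γdbar (lam * teta x) / lam^2) * a x * pd a x i) :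
    ∀ x : Fin d → ℝ, ∀ s t : Fin d,
      (((1/2) * ∑ m, pd (fun y => vt y m) x s * pd (fun y => vt y m) x t
          + (pd (fun y => wt y s) x t + pd (fun y => wt y t) x s) / 2)
        - ((1/2) * ∑ m, pd (fun y => v y m) x s * pd (fun y => v y m) x t
          + (pd (fun y => w y s) x t + pd (fun y => w y t) x s) / 2)
        - (a x)^2 * η s * η t)
      = -(Γ (lam * teta x) / lam) * a x * pd2 (fun y => v y n) x s t
        + (Γdbar (lam * teta x) / lam^2) * a x * pd2 a x s t
        + (Γtbar (lam * teta x) / lam^2) * pd a x s * pd a x t :=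
  corrugation_step (fun τ => (hasDerivAt_Γ τ).differentiableAt)
    (fun τ => (hasDerivAt_Γbar τ).differentiableAt) (fun τ => (hasDerivAt_Γdbar τ).differentiableAt)
    half_deriv_Γ_sq_add_deriv_Γbar deriv_Γ_mul_Γ_add_two_Γbar_add_deriv_Γdbar half_Γ_sq_add_Γdbar
    hv (hw.differentiable (by norm_num)) ha hlam.ne' η n teta hteta vt hvt wt hwt

/-- Kuiper's corrugation step identity for the Von Kármán system: with
ṽ = v + (Γ(λt_η)/λ) a e_n and
w̃ = w − (Γ(λt_η)/λ) a ∇v^n + (Γ̄(λt_η)/λ) a² η + (Γ̿(λt_η)/λ²) a ∇a,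
one has ((1/2)(∇ṽ)ᵀ∇ṽ + sym∇w̃) − ((1/2)(∇v)ᵀ∇v + sym∇w) − a² η⊗η
      = −(Γ(λt_η)/λ) a ∇²v^n + (Γ̿(λt_η)/λ²) a ∇²a + (Γ̃(λt_η)/λ²) ∇a⊗∇a. -/
theorem stmt6 (d k : ℕ)
    (v : (Fin d → ℝ) → Fin k → ℝ) (w : (Fin d → ℝ) → Fin d → ℝ)
    (a : (Fin d → ℝ) → ℝ)
    (hv : ContDiff ℝ 2 v) (hw : ContDiff ℝ 2 w) (ha : ContDiff ℝ 2 a)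
    (lam : ℝ) (hlam : 0 < lam)
    (η : Fin d → ℝ) (hη : ∑ i, η i ^ 2 = 1) (n : Fin k)
    (teta : (Fin d → ℝ) → ℝ) (hteta : teta = fun x => ∑ i, x i * η i)
    (vt : (Fin d → ℝ) → Fin k → ℝ)
    (hvt : vt = fun x m =>
      v x m + (Γ (lam * teta x) / lam) * a x * (if m = n then 1 else 0))
    (wt : (Fin d → ℝ) → Fin d → ℝ)
    (hwt : wt = fun x i =>
      w x i - (Γ (lam * teta x) / lam) * a x * pd (fun y => v y n) x i
        + (Γbar (lam * teta x) / lam) * (a x)^2 * η i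
        + (Γdbar (lam * teta x) / lam^2) * a x * pd a x i) :
    ∀ x : Fin d → ℝ, ∀ s t : Fin d,
      (((1/2) * ∑ m, pd (fun y => vt y m) x s * pd (fun y => vt y m) x t
          + (pd (fun y => wt y s) x t + pd (fun y => wt y t) x s) / 2)
        - ((1/2) * ∑ m, pd (fun y => v y m) x s * pd (fun y => v y m) x t
          + (pd (fun y => w y s) x t + pd (fun y => w y t) x s) / 2)
        - (a x)^2 * η s * η t)
      = -(Γ (lam * teta x) / lam) * a x * pd2 (fun y => v y n) x s t
        + (Γdbar (lam * teta x) / lam^2) * a x * pd2 a x s t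
        + (Γtbar (lam * teta x) / lam^2) * pd a x s * pd a x t :=
  stmt6_general d k v w a hv hw ha lam hlam η n teta hteta vt hvt wt hwt
end
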